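/- arXiv:2109.07928 — 2 statements merged into one kernel-verified Lean document; each statement's English description precedes it below -/
import Mathlib

section
/- (Countable subadditivity of the upper expectation.) If Y^1, Y^2, … are generalized processes with Y^k_t(ω) ≥ 0 for all (t,ω) ∈ [0,∞)×Ω and all k, then Ē(Σ_{k=1}^∞ Y^k) ≤ Σ_{k=1}^∞ Ē(Y^k). -/
open MeasureTheory Filter Set
open scoped ENNReal NNReal Topology

noncomputable section

namespace ModelFreeBDG

/-- A martingale space: a filtration `F` on `Ω` (with `F 0` trivial) together with
finitely many basic continuous martingales `S j`, each adapted with all trajectories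
continuous.  Time is indexed by `ℝ≥0`. -/
structure MartingaleSpace (Ω : Type*) where
  F : ℝ≥0 → MeasurableSpace Ω
  mono : Monotone F
  F0_trivial : F 0 = ⊥
  d : ℕ
  S : Fin d → ℝ≥0 → Ω → ℝ
  S_adapted : ∀ j t, Measurable[F t] fun ω => S j t ω
  S_cont : ∀ j ω, Continuous fun t => S j t ω

variable {Ω : Type*}

/-- A stopping time w.r.t. the filtration of `M`, with values in `[0,∞]`. -/
def MartingaleSpace.IsStoppingTime (M : MartingaleSpace Ω) (τ : Ω → ℝ≥0∞) : Prop :=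
  ∀ t : ℝ≥0, MeasurableSet[M.F t] {ω | τ ω ≤ (t : ℝ≥0∞)}

/-- `g` is measurable with respect to the σ-field `F_τ` generated by the stopping time `τ`. -/
def MartingaleSpace.MeasStopped (M : MartingaleSpace Ω) (τ : Ω → ℝ≥0∞) (g : Ω → ℝ) : Prop :=
  ∀ B : Set ℝ, MeasurableSet B → ∀ t : ℝ≥0,
    MeasurableSet[M.F t] {ω | g ω ∈ B ∧ τ ω ≤ (t : ℝ≥0∞)}

/-- A proper sequence of stopping times: nondecreasing, starting from `0`, and on each path
either divergent to `+∞` or eventually constant. -/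
structure ProperSeq (M : MartingaleSpace Ω) where
  τ : ℕ → Ω → ℝ≥0∞
  stopping : ∀ n, M.IsStoppingTime (τ n)
  mono : ∀ ω, Monotone fun n => τ n ω
  zero : ∀ ω, τ 0 ω = 0
  proper : ∀ ω, Tendsto (fun n => τ n ω) atTop (𝓝 ⊤) ∨ ∃ n, ∀ m, n ≤ m → τ m ω = τ n ω

/-- A simple trading strategy. -/
structure SimpleStrategy (M : MartingaleSpace Ω) where
  c : ℝ
  τ : ProperSeq M
  g : ℕ → Ω → ℝ
  g_bdd : ∀ n, ∃ C : ℝ, ∀ ω, |g n ω| ≤ C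
  g_meas : ∀ n, M.MeasStopped (τ.τ n) (g n)
  g_top : ∀ n ω, τ.τ n ω = ⊤ → g n ω = 0

/-- `τ(ω) ∧ t`, as an element of `ℝ≥0`. -/
def stopMin (τ : Ω → ℝ≥0∞) (t : ℝ≥0) (ω : Ω) : ℝ≥0 :=
  (min (τ ω) (t : ℝ≥0∞)).toNNReal

/-- The simple integral `(G·X)_t = c + Σ_{n≥1} g_{n-1}(X_{τ_n∧t} - X_{τ_{n-1}∧t})` for a
real process `X`. -/
def SimpleStrategy.integral {M : MartingaleSpace Ω} (G : SimpleStrategy M)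
    (X : ℝ≥0 → Ω → ℝ) (t : ℝ≥0) (ω : Ω) : ℝ :=
  G.c + ∑' n : ℕ,
    G.g n ω * (X (stopMin (G.τ.τ (n + 1)) t ω) ω - X (stopMin (G.τ.τ n) t ω) ω)

/-- A simple capital process: a finite sum `Σ_{j} (G^j · S^j)` over simple trading strategies. -/
def IsSimpleCapital (M : MartingaleSpace Ω) (X : ℝ≥0 → Ω → ℝ) : Prop :=
  ∃ G : Fin M.d → SimpleStrategy M, ∀ t ω, X t ω = ∑ j, (G j).integral (M.S j) t ω

/-- The class `𝓒` of nonnegative supermartingales: the smallest class of `[-∞,∞]`-valued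
processes containing all nonnegative simple capital processes, closed under adding a simple
capital process whenever the sum stays nonnegative, and closed under pointwise `liminf`. -/
inductive IsNonnegSupermart (M : MartingaleSpace Ω) : (ℝ≥0 → Ω → EReal) → Prop
  | simple (X : ℝ≥0 → Ω → ℝ) (hX : IsSimpleCapital M X) (hpos : ∀ t ω, 0 ≤ X t ω) :
      IsNonnegSupermart M fun t ω => (X t ω : EReal)
  | add (X : ℝ≥0 → Ω → EReal) (Y : ℝ≥0 → Ω → ℝ) (hX : IsNonnegSupermart M X)
      (hY : IsSimpleCapital M Y) (hpos : ∀ t ω, 0 ≤ X t ω + (Y t ω : EReal)) :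
      IsNonnegSupermart M fun t ω => X t ω + (Y t ω : EReal)
  | liminf (Xs : ℕ → ℝ≥0 → Ω → EReal) (hXs : ∀ n, IsNonnegSupermart M (Xs n)) :
      IsNonnegSupermart M fun t ω => Filter.liminf (fun n => Xs n t ω) atTop

/-- The upper expectation `Ē Y` of a generalized process `Y`: the infimum of the (deterministic)
initial values of nonnegative supermartingales dominating `Y`. -/
def upperExp (M : MartingaleSpace Ω) (Y : ℝ≥0 → Ω → EReal) : EReal :=
  sInf {x : EReal | ∃ X, IsNonnegSupermart M X ∧ (∀ ω, X 0 ω = x) ∧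
    ∀ t ω, Y t ω ≤ X t ω}

/-- The outer measure `P̄ A := Ē 1_A` of a set of pairs `(t, ω)`. -/
def upperProb (M : MartingaleSpace Ω) (A : Set (ℝ≥0 × Ω)) : EReal :=
  upperExp M fun t ω => A.indicator (fun _ => (1 : EReal)) (t, ω)

/-- A set `E ⊆ [0,∞) × Ω` is instantly enforceable if some nonnegative supermartingale with
initial value `1` becomes `+∞` outside of `E`. -/
def InstantlyEnforceable (M : MartingaleSpace Ω) (E : Set (ℝ≥0 × Ω)) : Prop :=
  ∃ X, IsNonnegSupermart M X ∧ (∀ ω, X 0 ω = 1) ∧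
    ∀ t ω, (t, ω) ∉ E → X t ω = ⊤

/-- A set is instantly blockable iff its complement is instantly enforceable. -/
def InstantlyBlockable (M : MartingaleSpace Ω) (B : Set (ℝ≥0 × Ω)) : Prop :=
  InstantlyEnforceable M Bᶜ

/-- Assumption A: for any `t ≥ 0` and any instantly blockable set `B`, the projection of
`B ∩ ([0,t] × Ω)` onto `Ω` belongs to `F t`. -/
def AssumptionA (M : MartingaleSpace Ω) : Prop :=
  ∀ (t : ℝ≥0) (B : Set (ℝ≥0 × Ω)), InstantlyBlockable M B →
    MeasurableSet[M.F t] {ω | ∃ s : ℝ≥0, s ≤ t ∧ (s, ω) ∈ B}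

/-- The values of `X` are real w.i.e. -/
def RealWIE (M : MartingaleSpace Ω) (X : ℝ≥0 → Ω → EReal) : Prop :=
  InstantlyEnforceable M {p : ℝ≥0 × Ω | ∃ r : ℝ, X p.1 p.2 = (r : EReal)}

/-- The set of `(t,ω)` where `sup_{s ∈ [0,t]} |X_s(ω) - X^n_s(ω)| → 0` as `n → ∞`. -/
def unifConvSet (Xn : ℕ → ℝ≥0 → Ω → EReal) (X : ℝ≥0 → Ω → EReal) : Set (ℝ≥0 × Ω) :=
  {p | Tendsto (fun n => ⨆ s ∈ Icc (0 : ℝ≥0) p.1, (X s p.2 - Xn n s p.2).abs)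
    atTop (𝓝 (0 : ℝ≥0∞))}

/-- The class `𝓜` of martingales: the smallest class of adapted, real w.i.e. processes
containing all simple capital processes and closed under locally uniform limits w.i.e. -/
inductive IsMartingale (M : MartingaleSpace Ω) : (ℝ≥0 → Ω → EReal) → Prop
  | simple (X : ℝ≥0 → Ω → ℝ) (hX : IsSimpleCapital M X) :
      IsMartingale M fun t ω => (X t ω : EReal)
  | lim (Xn : ℕ → ℝ≥0 → Ω → EReal) (X : ℝ≥0 → Ω → EReal)
      (hXn : ∀ n, IsMartingale M (Xn n))
      (hadapted : ∀ t, Measurable[M.F t] (X t))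
      (hreal : RealWIE M X)
      (hconv : InstantlyEnforceable M (unifConvSet Xn X)) :
      IsMartingale M X

/-- `X_{τ ∧ t}(ω)`. -/
def stopVal (X : ℝ≥0 → Ω → EReal) (τ : Ω → ℝ≥0∞) (t : ℝ≥0) (ω : Ω) : EReal :=
  X (stopMin τ t ω) ω

/-- The simple quadratic variation `[X]^τ_t := Σ_{n≥1} (X_{τ_n∧t} - X_{τ_{n-1}∧t})²`,
as an element of `[0,∞]`. -/
def sqVarAlong (X : ℝ≥0 → Ω → EReal) (τ : ℕ → Ω → ℝ≥0∞) (t : ℝ≥0) (ω : Ω) : ℝ≥0∞ :=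
  ∑' n : ℕ, ((stopVal X (τ (n + 1)) t ω - stopVal X (τ n) t ω) ^ 2).abs

/-- `Y^{τ,*}_t := sup_n |Y_{τ_n ∧ t}|`, as an element of `[0,∞]`. -/
def supAlong (Y : ℝ≥0 → Ω → EReal) (τ : ℕ → Ω → ℝ≥0∞) (t : ℝ≥0) (ω : Ω) : ℝ≥0∞ :=
  ⨆ n : ℕ, (stopVal Y (τ n) t ω).abs

/-- The supremum process `Y^*_t := sup_{0 ≤ s ≤ t} |Y_s|`, as an element of `[0,∞]`. -/
def supProc (Y : ℝ≥0 → Ω → EReal) (t : ℝ≥0) (ω : Ω) : ℝ≥0∞ :=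
  ⨆ s ∈ Icc (0 : ℝ≥0) t, (Y s ω).abs

/-- The hitting time `σ(X,c) := inf {t ≥ 0 : |X_t| ≥ c}`. -/
def hitting (X : ℝ≥0 → Ω → EReal) (c : ℝ) (ω : Ω) : ℝ≥0∞ :=
  ⨅ t ∈ {t : ℝ≥0 | ENNReal.ofReal c ≤ (X t ω).abs}, (t : ℝ≥0∞)

/-- The oscillation of the trajectory of `X` on `[a,b]`. -/
def oscOn (X : ℝ≥0 → Ω → EReal) (a b : ℝ≥0) (ω : Ω) : EReal :=
  (⨆ s ∈ Icc a b, X s ω) - ⨅ s ∈ Icc a b, X s ω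

/-- The set of `(t,ω)` on which the sequence `σ` finely covers `X` with accuracy `δ`:
only finitely many `σ_n(ω) ≤ t`, and the oscillation of `X(ω)` on each interval
`[σ_n(ω)∧t, σ_{n+1}(ω)∧t]` is at most `δ`. -/
def fineCoverSet (σ : ℕ → Ω → ℝ≥0∞) (X : ℝ≥0 → Ω → EReal) (δ : ℝ) : Set (ℝ≥0 × Ω) :=
  {p | {n : ℕ | σ n p.2 ≤ (p.1 : ℝ≥0∞)}.Finite ∧
    ∀ n, oscOn X (stopMin (σ n) p.1 p.2) (stopMin (σ (n + 1)) p.1 p.2) p.2 ≤ (δ : EReal)}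

/-- `σ` is a fine cover of `X` with accuracy `δ` on the set `E`. -/
def FinelyCoversOn (M : MartingaleSpace Ω) (σ : ℕ → Ω → ℝ≥0∞) (X : ℝ≥0 → Ω → EReal)
    (δ : ℝ) (E : Set (ℝ≥0 × Ω)) : Prop :=
  (∀ n, M.IsStoppingTime (σ n)) ∧ (∀ ω, Monotone fun n => σ n ω) ∧ (∀ ω, σ 0 ω = 0) ∧
    E ⊆ fineCoverSet σ X δ

/-- `σ` is a fine cover of `X` with accuracy `δ` w.i.e. -/
def ProperSeq.FinelyCoversWIE {M : MartingaleSpace Ω} (σ : ProperSeq M)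
    (X : ℝ≥0 → Ω → EReal) (δ : ℝ) : Prop :=
  InstantlyEnforceable M (fineCoverSet σ.τ X δ)

/-- The set of `(t,ω)` on which `sup_{s ∈ [0, σ(ω) ∧ t]} |Y^m_s(ω) - Y_s(ω)| → 0`, i.e.
locally uniform convergence on the random interval `[0,σ]∖{+∞}`. -/
def convWithinSet (Ym : ℕ → ℝ≥0 → Ω → EReal) (Y : ℝ≥0 → Ω → EReal) (σ : Ω → ℝ≥0∞) :
    Set (ℝ≥0 × Ω) :=
  {p | Tendsto (fun m => ⨆ s ∈ Icc (0 : ℝ≥0) (stopMin σ p.1 p.2),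
    (Ym m s p.2 - Y s p.2).abs) atTop (𝓝 (0 : ℝ≥0∞))}

/-- The set of `(t,ω)` on which `sup_{s ∈ [0,t]} |Y^m_s(ω) - Y_s(ω)| → 0`, i.e. locally
uniform convergence. -/
def locUnifConvSet (Ym : ℕ → ℝ≥0 → Ω → EReal) (Y : ℝ≥0 → Ω → EReal) : Set (ℝ≥0 × Ω) :=
  {p | Tendsto (fun m => ⨆ s ∈ Icc (0 : ℝ≥0) p.1, (Ym m s p.2 - Y s p.2).abs)
    atTop (𝓝 (0 : ℝ≥0∞))}

/-- `Q` is a quadratic variation of `X`: a real continuous adapted process such that, for every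
summable sequence of positive accuracies `δ_m` and every sequence of proper sequences of
stopping times `σ^m` finely covering `X` with accuracy `δ_m` w.i.e., and every `c > 0`, the
simple quadratic variations `[X]^{σ^m}` converge locally uniformly on `[0, σ(X,c)]∖{+∞}`
w.i.e. to `Q`. -/
structure IsQuadVar (M : MartingaleSpace Ω) (X : ℝ≥0 → Ω → EReal) (Q : ℝ≥0 → Ω → ℝ) :
    Prop where
  adapted : ∀ t, Measurable[M.F t] (Q t)
  cont : ∀ ω, Continuous fun t => Q t ω
  conv : ∀ δ : ℕ → ℝ, (∀ m, 0 < δ m) → Summable δ →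
    ∀ σ : ℕ → ProperSeq M, (∀ m, (σ m).FinelyCoversWIE X (δ m)) →
    ∀ c : ℝ, 0 < c →
      InstantlyEnforceable M (convWithinSet
        (fun m t ω => ((sqVarAlong X (σ m).τ t ω : ℝ≥0∞) : EReal))
        (fun t ω => ((Q t ω : ℝ) : EReal)) (hitting X c))

open Classical in
/-- The Lebesgue–Stieltjes measure on `ℝ` associated with a monotone continuous function
(and the zero measure otherwise). -/
def lsMeasure (a : ℝ → ℝ) : Measure ℝ :=
  if h : Monotone a ∧ Continuous a then
    StieltjesFunction.measure ⟨a, h.1, fun _ => h.2.continuousWithinAt⟩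
  else 0

/-- The pathwise Lebesgue–Stieltjes integral `∫_0^t g dа` for functions on `ℝ≥0`. -/
def lsInt (g : ℝ≥0 → ℝ) (a : ℝ≥0 → ℝ) (t : ℝ≥0) : ℝ :=
  ∫ s in Ioc (0 : ℝ) (t : ℝ), g s.toNNReal ∂(lsMeasure fun s => a s.toNNReal)

/-- The pathwise Lebesgue–Stieltjes integral `∫_0^t g d(¼ Qp − ¼ Qm)`, i.e. the integral
with respect to a quadratic covariation `[X,Y] = ¼[X+Y] − ¼[X−Y]`. -/
def covIntegral (g : ℝ≥0 → ℝ) (Qp Qm : ℝ≥0 → ℝ) (t : ℝ≥0) : ℝ :=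
  (1 / 4 : ℝ) * lsInt g Qp t - (1 / 4 : ℝ) * lsInt g Qm t

/-- The step process associated with a simple trading strategy:
`G_t = Σ_{n≥1} g_{n-1} 1_{[τ_{n-1}, τ_n)}(t)`. -/
def SimpleStrategy.step {M : MartingaleSpace Ω} (G : SimpleStrategy M) (t : ℝ≥0) (ω : Ω) :
    ℝ :=
  ∑' n : ℕ, ({t' : ℝ≥0 | G.τ.τ n ω ≤ (t' : ℝ≥0∞) ∧ (t' : ℝ≥0∞) < G.τ.τ (n + 1) ω}).indicator
    (fun _ => G.g n ω) t

/-- The simple integral `(G·X)` of a simple trading strategy against an `EReal`-valued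
process. -/
def SimpleStrategy.integralE {M : MartingaleSpace Ω} (G : SimpleStrategy M)
    (X : ℝ≥0 → Ω → EReal) (t : ℝ≥0) (ω : Ω) : EReal :=
  (G.c : EReal) + ∑' n : ℕ,
    (G.g n ω : EReal) * (stopVal X (G.τ.τ (n + 1)) t ω - stopVal X (G.τ.τ n) t ω)

/-- Membership in the space `𝓡` of generalized processes whose trajectories are Borel
measurable and real on every interval `[0,t]` w.i.e. -/
def MemR (M : MartingaleSpace Ω) (G : ℝ≥0 → Ω → EReal) : Prop :=
  InstantlyEnforceable M {p : ℝ≥0 × Ω |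
    (∀ s ∈ Icc (0 : ℝ≥0) p.1, ∃ r : ℝ, G s p.2 = (r : EReal)) ∧
    Measurable ((Icc (0 : ℝ≥0) p.1).restrict fun s => G s p.2)}

/-- The pseudo-distance `d_{∞,X,loc}(Y,Z) := Σ_{N≥1} 2^{-N} Ē((Y−Z)^*_{·∧σ(X,N)})`. -/
def dInfLoc (M : MartingaleSpace Ω) (X : ℝ≥0 → Ω → EReal) (Y Z : ℝ≥0 → Ω → EReal) :
    EReal :=
  ∑' N : ℕ, (((1 / 2 : ℝ) ^ (N + 1) : ℝ) : EReal) *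
    upperExp M (fun t ω =>
      ((⨆ s ∈ Icc (0 : ℝ≥0) (stopMin (hitting X ((N : ℝ) + 1)) t ω),
        (Y s ω - Z s ω).abs : ℝ≥0∞) : EReal))

/-- The approximating stopping times `τ^m_n` for a càdlàg integrand `G`:
`τ^m_0 = 0`, `τ^m_{n+1} = inf{t > τ^m_n : |G_t − G_{τ^m_n}| ≥ 2^{-m}}`. -/
def approxTimes (G : ℝ≥0 → Ω → ℝ) (m : ℕ) : ℕ → Ω → ℝ≥0∞
  | 0 => fun _ => 0
  | n + 1 => fun ω =>
      ⨅ t ∈ {t : ℝ≥0 | approxTimes G m n ω < (t : ℝ≥0∞) ∧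
        ((2 : ℝ) ^ m)⁻¹ ≤ |G t ω - G ((approxTimes G m n ω).toNNReal) ω|}, (t : ℝ≥0∞)

/-- The approximating simple integral `(G^m · X)` where
`G^m_t = Σ_{n≥1} G_{τ^m_{n-1}} 1_{[τ^m_{n-1}, τ^m_n)}(t)`. -/
def approxInt (G : ℝ≥0 → Ω → ℝ) (X : ℝ≥0 → Ω → EReal) (m : ℕ) (t : ℝ≥0) (ω : Ω) :
    EReal :=
  ∑' n : ℕ, ((G ((approxTimes G m n ω).toNNReal) ω : ℝ) : EReal) *
    (stopVal X (approxTimes G m (n + 1)) t ω - stopVal X (approxTimes G m n) t ω)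

/-- `I` is a model-free integral `G·X`: a representative of the `d_{∞,X,loc}`-limit of the
classes of the approximating simple integrals `G^m·X`. -/
def IsModelFreeIntegral (M : MartingaleSpace Ω) (X : ℝ≥0 → Ω → EReal) (G : ℝ≥0 → Ω → ℝ)
    (I : ℝ≥0 → Ω → EReal) : Prop :=
  Tendsto (fun m => dInfLoc M X (approxInt G X m) I) atTop (𝓝 (0 : EReal))

/-- The filtration of `M` is right-continuous. -/
def RightContinuousFiltration (M : MartingaleSpace Ω) : Prop :=
  ∀ t : ℝ≥0, M.F t = ⨅ (s : ℝ≥0) (_ : t < s), M.F s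

/-- A càdlàg function on `ℝ≥0`. -/
def IsCadlag (f : ℝ≥0 → ℝ) : Prop :=
  (∀ t, ContinuousWithinAt f (Ici t) t) ∧
    ∀ t : ℝ≥0, 0 < t → ∃ l : ℝ, Tendsto f (𝓝[<] t) (𝓝 l)

/-- The truncated variation `TV^c(x,[0,t])` of a function `x : ℝ≥0 → ℝ`. -/
def truncVar (x : ℝ≥0 → ℝ) (c : ℝ) (t : ℝ≥0) : ℝ≥0∞ :=
  ⨆ (n : ℕ) (u : Fin (n + 1) → ℝ≥0) (_ : Monotone u) (_ : ∀ i, u i ≤ t),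
    ∑ i : Fin n, ENNReal.ofReal (|x (u i.succ) - x (u i.castSucc)| - c)

/-! Given `c` above `Σ_k Ē(Y^k)`, choose `X^k ∈ 𝓒` dominating `Y^k` with initial values whose
sum stays below `c`. The class `𝓒` is closed under finite sums (by induction on its generation,
using `liminf (u_n + a) = liminf u_n + a`), hence, as a `liminf` of partial sums, under countable
sums of its members, and `Σ_k X^k` dominates `Σ_k Y^k`. Addition on `EReal` is not continuous,
so the sums of initial values are estimated in `ℝ≥0∞`. -/

lemma _root_.EReal.hasSum_coe_ennreal {ι : Type*} (f : ι → ℝ≥0∞) :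
    HasSum (fun i => (f i : EReal)) ((∑' i, f i : ℝ≥0∞) : EReal) :=
  ENNReal.summable.hasSum.map
    (⟨⟨(↑), EReal.coe_ennreal_zero⟩, EReal.coe_ennreal_add⟩ : ℝ≥0∞ →+ EReal)
    continuous_coe_ennreal_ereal

lemma _root_.EReal.coe_ennreal_tsum {ι : Type*} (f : ι → ℝ≥0∞) :
    ((∑' i, f i : ℝ≥0∞) : EReal) = ∑' i, (f i : EReal) :=
  (EReal.hasSum_coe_ennreal f).tsum_eq.symm

lemma _root_.EReal.summable_of_nonneg {ι : Type*} {f : ι → EReal} (hf : ∀ i, 0 ≤ f i) :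
    Summable f := by
  simpa only [EReal.coe_toENNReal (hf _)] using
    (EReal.hasSum_coe_ennreal fun i => (f i).toENNReal).summable

lemma _root_.ENNReal.exists_forall_lt_tsum_lt {ι : Type*} [Countable ι] {e : ι → ℝ≥0∞}
    {c : ℝ≥0∞} (h : ∑' i, e i < c) : ∃ x : ι → ℝ≥0∞, (∀ i, e i < x i) ∧ ∑' i, x i < c := by
  obtain ⟨δ, hδ_pos, hδ⟩ := ENNReal.exists_pos_sum_of_countable' (tsub_pos_of_lt h).ne' ι
  have he_ne_top : ∀ i, e i ≠ ∞ := fun i =>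
    ne_top_of_le_ne_top (h.trans_le le_top).ne (ENNReal.le_tsum i)
  refine ⟨fun i => e i + δ i, fun i => ENNReal.lt_add_right (he_ne_top i) (hδ_pos i).ne', ?_⟩
  rw [ENNReal.tsum_add]
  exact lt_tsub_iff_left.1 hδ

lemma _root_.EReal.liminf_add_const {α : Type*} {F : Filter α} [F.NeBot] (u : α → EReal)
    {c : EReal} (hu : liminf u F ≠ ⊥) (hc : c ≠ ⊥) :
    liminf (fun n => u n + c) F = liminf u F + c :=
  ((monotone_id.add_const c).map_liminf_of_continuousAt u
    ((EReal.continuousAt_add (.inr hc) (.inl hu)).comp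
      (continuous_id.prodMk continuous_const).continuousAt)).symm

variable {M : MartingaleSpace Ω}

def ProperSeq.constZero (M : MartingaleSpace Ω) : ProperSeq M where
  τ _ _ := 0
  stopping _ _ := MeasurableSet.const _
  mono _ := monotone_const
  zero _ := rfl
  proper _ := Or.inr ⟨0, fun _ _ => rfl⟩

def SimpleStrategy.zero (M : MartingaleSpace Ω) : SimpleStrategy M where
  c := 0
  τ := ProperSeq.constZero M
  g _ _ := 0
  g_bdd _ := ⟨0, fun _ => by simp⟩
  g_meas _ B _ t := MeasurableSet.const ((0 : ℝ) ∈ B ∧ (0 : ℝ≥0∞) ≤ t)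
  g_top _ _ _ := rfl

lemma isSimpleCapital_zero (M : MartingaleSpace Ω) : IsSimpleCapital M fun _ _ => 0 :=
  ⟨fun _ => SimpleStrategy.zero M, fun _ _ => by
    simp [SimpleStrategy.integral, SimpleStrategy.zero]⟩

namespace IsNonnegSupermart

lemma nonneg {X : ℝ≥0 → Ω → EReal} (hX : IsNonnegSupermart M X) (t : ℝ≥0) (ω : Ω) :
    0 ≤ X t ω := by
  induction hX generalizing t ω with
  | simple _ _ hpos => exact EReal.coe_nonneg.2 (hpos t ω)
  | add _ _ _ _ hpos => exact hpos t ω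
  | liminf _ _ ih => exact le_liminf_of_le (by isBoundedDefault) (.of_forall fun n => ih n t ω)

lemma zero (M : MartingaleSpace Ω) : IsNonnegSupermart M fun _ _ => 0 := by
  simpa using simple _ (isSimpleCapital_zero M) fun _ _ => le_rfl

lemma add_supermart {X Y : ℝ≥0 → Ω → EReal} (hX : IsNonnegSupermart M X)
    (hY : IsNonnegSupermart M Y) : IsNonnegSupermart M fun t ω => X t ω + Y t ω := by
  induction hX with
  | simple X hX hpos =>
    convert add _ X hY hX fun t ω => add_nonneg (hY.nonneg t ω) (EReal.coe_nonneg.2 (hpos t ω))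
      using 1
    funext t ω
    exact add_comm _ _
  | add X Z _ hZ hpos ih =>
    convert add _ Z ih hZ fun t ω => (add_right_comm _ _ _).trans_ge
      (add_nonneg (hpos t ω) (hY.nonneg t ω)) using 1
    funext t ω
    exact add_right_comm _ _ _
  | liminf Xs hXs ih =>
    convert liminf _ ih using 1
    funext t ω
    exact (EReal.liminf_add_const _
      (EReal.bot_lt_zero.trans_le ((liminf Xs hXs).nonneg t ω)).ne'
      (EReal.bot_lt_zero.trans_le (hY.nonneg t ω)).ne').symm

lemma finset_sum {ι : Type*} (s : Finset ι) {X : ι → ℝ≥0 → Ω → EReal}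
    (hX : ∀ i ∈ s, IsNonnegSupermart M (X i)) :
    IsNonnegSupermart M fun t ω => ∑ i ∈ s, X i t ω := by
  classical
  induction s using Finset.induction_on with
  | empty => simpa using zero M
  | insert i s hi ih =>
    simp only [Finset.sum_insert hi]
    exact (hX i (Finset.mem_insert_self i s)).add_supermart
      (ih fun j hj => hX j (Finset.mem_insert_of_mem hj))

lemma tsum {X : ℕ → ℝ≥0 → Ω → EReal} (hX : ∀ k, IsNonnegSupermart M (X k)) :
    IsNonnegSupermart M fun t ω => ∑' k, X k t ω := by
  convert liminf _ fun n => finset_sum (Finset.range n) fun k _ => hX k using 1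
  funext t ω
  exact (EReal.summable_of_nonneg fun k => (hX k).nonneg t ω).hasSum.tendsto_sum_nat.liminf_eq.symm

end IsNonnegSupermart

lemma upperExp_le_of_le {Y X : ℝ≥0 → Ω → EReal} (hX : IsNonnegSupermart M X) {x : EReal}
    (hX₀ : ∀ ω, X 0 ω = x) (hYX : ∀ t ω, Y t ω ≤ X t ω) : upperExp M Y ≤ x :=
  sInf_le ⟨X, hX, hX₀, hYX⟩

lemma upperExp_nonneg [Nonempty Ω] (M : MartingaleSpace Ω) (Y : ℝ≥0 → Ω → EReal) :
    0 ≤ upperExp M Y :=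
  le_sInf fun _ ⟨_, hX, hX₀, _⟩ => hX₀ (Classical.arbitrary Ω) ▸ hX.nonneg 0 _

lemma upperExp_tsum_le_of_lt [Nonempty Ω] {Y : ℕ → ℝ≥0 → Ω → EReal}
    (hY : ∀ k t ω, 0 ≤ Y k t ω) {x : ℕ → ℝ≥0∞} (hx : ∀ k, upperExp M (Y k) < x k) :
    upperExp M (fun t ω => ∑' k, Y k t ω) ≤ ((∑' k, x k : ℝ≥0∞) : EReal) := by
  choose w hw hwx using fun k => sInf_lt_iff.1 (hx k)
  choose X hX hX₀ hYX using hw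
  have hw_nonneg : ∀ k, 0 ≤ w k := fun k => hX₀ k (Classical.arbitrary Ω) ▸ (hX k).nonneg 0 _
  calc upperExp M (fun t ω => ∑' k, Y k t ω)
      ≤ ∑' k, w k :=
        upperExp_le_of_le (IsNonnegSupermart.tsum hX) (fun ω => tsum_congr (hX₀ · ω))
          fun t ω => (EReal.summable_of_nonneg (hY · t ω)).tsum_le_tsum (hYX · t ω)
            (EReal.summable_of_nonneg fun k => (hX k).nonneg t ω)
    _ ≤ ∑' k, (x k : EReal) :=
        (EReal.summable_of_nonneg hw_nonneg).tsum_le_tsum (hwx · |>.le)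
          (EReal.summable_of_nonneg fun k => EReal.coe_ennreal_nonneg (x k))
    _ = ((∑' k, x k : ℝ≥0∞) : EReal) := (EReal.coe_ennreal_tsum x).symm

/-- Countable subadditivity of the upper expectation for nonnegative
generalized processes. -/
theorem upperExp_countable_subadditive (M : MartingaleSpace Ω)
    (Y : ℕ → ℝ≥0 → Ω → EReal) (hY : ∀ k t ω, 0 ≤ Y k t ω) :
    upperExp M (fun t ω => ∑' k : ℕ, Y k t ω) ≤ ∑' k : ℕ, upperExp M (Y k) := by
  rcases isEmpty_or_nonempty Ω with hΩ | hΩ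
  · exact upperExp_le_of_le (.zero M) isEmptyElim fun _ => isEmptyElim
  have hE : ∀ Z, ((upperExp M Z).toENNReal : EReal) = upperExp M Z := fun Z =>
    EReal.coe_toENNReal (upperExp_nonneg M Z)
  rw [← hE, ← tsum_congr fun k => hE (Y k), ← EReal.coe_ennreal_tsum,
    EReal.coe_ennreal_le_coe_ennreal_iff]
  refine le_of_forall_gt_imp_ge_of_dense fun c hc => ?_
  obtain ⟨x, hex, hxc⟩ := ENNReal.exists_forall_lt_tsum_lt hc
  have hx : ∀ k, upperExp M (Y k) < x k := fun k =>
    hE (Y k) ▸ EReal.coe_ennreal_lt_coe_ennreal_iff.2 (hex k)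
  rw [← EReal.coe_ennreal_le_coe_ennreal_iff, hE]
  exact (upperExp_tsum_le_of_lt hY hx).trans (EReal.coe_ennreal_le_coe_ennreal_iff.2 hxc.le)

end ModelFreeBDG
end
end

section
/- Let X be a martingale, σ = (σ_n) a fine cover of X with accuracy δ > 0 on a set E ⊆ [0,∞)×Ω, and τ = (τ_n) a sequence of 𝔽-stopping times such that for any (t,ω) ∈ E only finitely many n satisfy τ_n(ω) ≤ t. Let υ = (υ_n) be the non-decreasing rearrangement of the stopping times from both sequences σ and τ with redundancies deleted. Then for all (t,ω) ∈ E, [[X]^σ − [X]^υ]^υ_t ≤ 4δ² [X]^υ_t, where for a process Z the quantity [Z]^υ_t := Σ_{n≥1}(Z_{υ_n∧t} − Z_{υ_{n−1}∧t})². -/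
open MeasureTheory Filter Set
open scoped ENNReal NNReal Topology

noncomputable section

namespace ModelFreeBDG

variable {Ω : Type*}

/-! Fix `ω`, `t` and write `aₖ = υₖ ∧ t`. Since every `σₙ` is some `υⱼ`, each step `[aₖ, aₖ₊₁]`
lies inside one interval `[σₙ ∧ t, σₙ₊₁ ∧ t]`, on which `[X]^σ_s = [X]^σ_c + (X_s - X_c)²` with
`c = σₙ ∧ t`, while `[X]^υ` grows by `(X_{aₖ₊₁} - X_{aₖ})²`. So the increment of `[X]^σ - [X]^υ`
over the step is `2 (X_{aₖ₊₁} - X_{aₖ}) (X_{aₖ} - X_c)`, and `|X_{aₖ} - X_c| ≤ δ` by the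
oscillation bound; squaring and summing over `k` gives the estimate. -/

namespace EReal

lemma abs_coe_sub_coe_sq (r s : ℝ) :
    (((r : EReal) - s) ^ 2).abs = ENNReal.ofReal ((r - s) ^ 2) := by
  rw [← EReal.coe_sub, ← EReal.coe_pow, EReal.abs_def, abs_sq]

lemma exists_coe_of_abs_sub_sq_ne_top {u v : EReal} (h : ((u - v) ^ 2).abs ≠ ⊤) :
    ∃ s : ℝ, v = s := by
  induction v with
  | bot => induction u <;> simp [sq] at h
  | top => simp [sq] at h
  | coe s => exact ⟨s, rfl⟩

lemma coe_ennreal_add_ofReal {p : ℝ≥0∞} (hp : p ≠ ⊤) {q : ℝ} (hq : 0 ≤ q) :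
    ((p + ENNReal.ofReal q : ℝ≥0∞) : EReal) = ((p.toReal + q : ℝ) : EReal) := by
  rw [EReal.coe_ennreal_add, ← EReal.coe_ennreal_toReal hp, EReal.coe_ennreal_ofReal,
    max_eq_left hq, EReal.coe_add]

end EReal

lemma exists_le_lt_succ_of_finite {α : Type*} [LinearOrder α] {f : ℕ → α} {s : α}
    (h0 : f 0 ≤ s) (hfin : {n | f n ≤ s}.Finite) : ∃ n, f n ≤ s ∧ s < f (n + 1) := by
  by_contra! h
  have hall : ∀ n, f n ≤ s := fun n => Nat.rec h0 h n
  exact Set.infinite_univ (hfin.subset fun n _ => hall n)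

lemma sq_increment_le {s v x y c δ : ℝ} (h : |x - c| ≤ δ) :
    ((s + (y - c) ^ 2) - (v + (y - x) ^ 2) - ((s + (x - c) ^ 2) - v)) ^ 2
      ≤ 4 * δ ^ 2 * (y - x) ^ 2 := by
  have hxc : (x - c) ^ 2 ≤ δ ^ 2 := sq_le_sq' (abs_le.mp h).1 (abs_le.mp h).2
  calc ((s + (y - c) ^ 2) - (v + (y - x) ^ 2) - ((s + (x - c) ^ 2) - v)) ^ 2
      = 4 * (x - c) ^ 2 * (y - x) ^ 2 := by ring
    _ ≤ 4 * δ ^ 2 * (y - x) ^ 2 := by gcongr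

lemma abs_sq_increment_le {S V : ℝ≥0∞} (hS : S ≠ ⊤) (hV : V ≠ ⊤) {x y c δ : ℝ}
    (h : |x - c| ≤ δ) :
    (((((S + ENNReal.ofReal ((y - c) ^ 2) : ℝ≥0∞) : EReal)
        - ((V + ENNReal.ofReal ((y - x) ^ 2) : ℝ≥0∞) : EReal))
      - (((S + ENNReal.ofReal ((x - c) ^ 2) : ℝ≥0∞) : EReal) - (V : EReal))) ^ 2).abs
      ≤ ENNReal.ofReal (4 * δ ^ 2) * ENNReal.ofReal ((y - x) ^ 2) := by
  rw [EReal.coe_ennreal_add_ofReal hS (sq_nonneg _), EReal.coe_ennreal_add_ofReal hV (sq_nonneg _),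
    EReal.coe_ennreal_add_ofReal hS (sq_nonneg _), ← EReal.coe_ennreal_toReal hV,
    ← EReal.coe_sub, ← EReal.coe_sub, ← EReal.coe_sub, ← EReal.coe_pow, EReal.abs_def, abs_sq,
    ← ENNReal.ofReal_mul (by positivity)]
  exact ENNReal.ofReal_le_ofReal (sq_increment_le h)

section StoppedPaths

variable {X : ℝ≥0 → Ω → EReal} {ρ : ℕ → Ω → ℝ≥0∞} {τ τ' : Ω → ℝ≥0∞} {t : ℝ≥0} {ω : Ω}

lemma coe_stopMin (τ : Ω → ℝ≥0∞) (t : ℝ≥0) (ω : Ω) :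
    (stopMin τ t ω : ℝ≥0∞) = min (τ ω) t :=
  ENNReal.coe_toNNReal ((min_le_right _ _).trans_lt ENNReal.coe_lt_top).ne

lemma stopMin_congr (h : τ ω = τ' ω) : stopMin τ t ω = stopMin τ' t ω := by
  rw [stopMin, stopMin, h]

lemma stopMin_of_le (h : (t : ℝ≥0∞) ≤ τ ω) : stopMin τ t ω = t :=
  ENNReal.coe_injective (by rw [coe_stopMin, min_eq_right h])

lemma stopMin_stopMin_of_le (h : τ' ω ≤ τ ω) :
    stopMin τ' (stopMin τ t ω) ω = stopMin τ' t ω :=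
  ENNReal.coe_injective (by rw [coe_stopMin, coe_stopMin, coe_stopMin, ← min_assoc, min_eq_left h])

lemma le_stopMin_or_stopMin_succ_le (hρ : Monotone fun n => ρ n ω) (k j : ℕ) :
    ρ j ω ≤ stopMin (ρ k) t ω ∨ (stopMin (ρ (k + 1)) t ω : ℝ≥0∞) ≤ ρ j ω := by
  simp only [coe_stopMin]
  rcases le_or_gt j k with hj | hj
  · rcases le_or_gt (ρ j ω) t with ht | ht
    · exact Or.inl (le_min (hρ hj) ht)
    · exact Or.inr ((min_le_right _ _).trans ht.le)
  · exact Or.inr ((min_le_left _ _).trans (hρ hj))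

lemma sub_le_oscOn {a b u v : ℝ≥0} (hu : u ∈ Icc a b) (hv : v ∈ Icc a b) :
    X u ω - X v ω ≤ oscOn X a b ω :=
  EReal.sub_le_sub (le_biSup (fun s => X s ω) hu) (biInf_le (fun s => X s ω) hv)

lemma abs_sub_le_of_oscOn_le {a b u v : ℝ≥0} {r s δ : ℝ} (hu : u ∈ Icc a b) (hv : v ∈ Icc a b)
    (hr : X u ω = r) (hs : X v ω = s) (hosc : oscOn X a b ω ≤ δ) : |r - s| ≤ δ := by
  have h₁ := (sub_le_oscOn hu hv).trans hosc
  have h₂ := (sub_le_oscOn hv hu).trans hosc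
  rw [hr, hs, ← EReal.coe_sub, EReal.coe_le_coe_iff] at h₁ h₂
  exact abs_sub_le_iff.mpr ⟨h₁, h₂⟩

end StoppedPaths

section SqVarAlong

variable {X : ℝ≥0 → Ω → EReal} {ρ : ℕ → Ω → ℝ≥0∞} {ω : Ω}

lemma sqVarAlong_eq_zero_of_le (hρ : Monotone fun n => ρ n ω) {u : ℝ≥0}
    (hu : (u : ℝ≥0∞) ≤ ρ 0 ω) (hXu : ∃ r : ℝ, X u ω = r) : sqVarAlong X ρ u ω = 0 := by
  obtain ⟨r, hr⟩ := hXu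
  have hstop : ∀ m, stopMin (ρ m) u ω = u := fun m => stopMin_of_le (hu.trans (hρ m.zero_le))
  simp [sqVarAlong, stopVal, hstop, hr]

/- The values of `X` at `u` and `ρₙ ∧ u` must be real: in `EReal`, `⊤ - ⊤ = ⊥`, so the increments
`(X_u - X_u)²` after time `u` vanish only at real values. -/
lemma sqVarAlong_eq_add_sq (hρ : Monotone fun n => ρ n ω) {n : ℕ} {u : ℝ≥0}
    (hu : (u : ℝ≥0∞) ≤ ρ (n + 1) ω) (hXu : ∃ r : ℝ, X u ω = r)
    (hXv : ∃ s : ℝ, X (stopMin (ρ n) u ω) ω = s) :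
    sqVarAlong X ρ u ω = sqVarAlong X ρ (stopMin (ρ n) u ω) ω
      + ((X u ω - X (stopMin (ρ n) u ω) ω) ^ 2).abs := by
  set v := stopMin (ρ n) u ω with hv
  obtain ⟨r, hr⟩ := hXu
  obtain ⟨s, hs⟩ := hXv
  have hbelow : ∀ m ≤ n, stopMin (ρ m) v ω = stopMin (ρ m) u ω :=
    fun m hm => stopMin_stopMin_of_le (hρ hm)
  have habove_u : ∀ m, n < m → stopMin (ρ m) u ω = u :=
    fun m hm => stopMin_of_le (hu.trans (hρ hm))
  have habove_v : ∀ m, n ≤ m → stopMin (ρ m) v ω = v :=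
    fun m hm => stopMin_of_le (by rw [hv, coe_stopMin]; exact (min_le_left _ _).trans (hρ hm))
  rw [sqVarAlong, sqVarAlong, ← tsum_ite_eq n (fun _ => ((X u ω - X v ω) ^ 2).abs),
    ← ENNReal.tsum_add]
  refine tsum_congr fun m => ?_
  simp only [stopVal]
  rcases lt_trichotomy m n with hm | rfl | hm
  · rw [hbelow (m + 1) hm, hbelow m hm.le, if_neg hm.ne, add_zero]
  · rw [habove_u (m + 1) m.lt_succ_self, habove_v (m + 1) m.le_succ, habove_v m le_rfl,
      if_pos rfl, hs]
    simp
  · rw [habove_u (m + 1) (hm.trans m.lt_succ_self), habove_u m hm, habove_v (m + 1) (by omega),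
      habove_v m hm.le, if_neg hm.ne', hr, hs]
    simp

lemma sqVarAlong_stopMin_ne_top (hρ : Monotone fun n => ρ n ω) {t : ℝ≥0} (k : ℕ)
    (hX : ∀ i ≤ k, ∃ r : ℝ, X (stopMin (ρ i) t ω) ω = r) :
    sqVarAlong X ρ (stopMin (ρ k) t ω) ω ≠ ⊤ := by
  induction k with
  | zero =>
    rw [sqVarAlong_eq_zero_of_le hρ (by rw [coe_stopMin]; exact min_le_left _ _) (hX 0 le_rfl)]
    exact ENNReal.zero_ne_top
  | succ k ih =>
    have hprev : stopMin (ρ k) (stopMin (ρ (k + 1)) t ω) ω = stopMin (ρ k) t ω :=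
      stopMin_stopMin_of_le (hρ k.le_succ)
    obtain ⟨r, hr⟩ := hX (k + 1) le_rfl
    obtain ⟨s, hs⟩ := hX k k.le_succ
    rw [sqVarAlong_eq_add_sq hρ (by rw [coe_stopMin]; exact min_le_left _ _) ⟨r, hr⟩
      ⟨s, hprev ▸ hs⟩, hprev, hr, hs, EReal.abs_coe_sub_coe_sq]
    exact ENNReal.add_ne_top.mpr ⟨ih fun i hi => hX i (hi.trans k.le_succ), ENNReal.ofReal_ne_top⟩

end SqVarAlong

def sqVarGap (X : ℝ≥0 → Ω → EReal) (σ υ : ℕ → Ω → ℝ≥0∞) (t : ℝ≥0) (ω : Ω) : EReal :=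
  (sqVarAlong X σ t ω : EReal) - (sqVarAlong X υ t ω : EReal)

section Refinement

variable {X : ℝ≥0 → Ω → EReal} {σ υ : ℕ → Ω → ℝ≥0∞} {δ : ℝ} {t : ℝ≥0} {ω : Ω}

lemma exists_bracket_stopMin (hσ0 : σ 0 ω = 0) (hυ : Monotone fun n => υ n ω)
    (hσυ : range (fun n => σ n ω) ⊆ range (fun n => υ n ω))
    (hfin : {n | σ n ω ≤ t}.Finite) (k : ℕ) :
    ∃ n, σ n ω ≤ stopMin (υ k) t ω ∧ (stopMin (υ k) t ω : ℝ≥0∞) < σ (n + 1) ω ∧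
      (stopMin (υ (k + 1)) t ω : ℝ≥0∞) ≤ σ (n + 1) ω := by
  have hkt : (stopMin (υ k) t ω : ℝ≥0∞) ≤ t := by rw [coe_stopMin]; exact min_le_right _ _
  obtain ⟨n, hn, hn1⟩ := exists_le_lt_succ_of_finite (f := fun n => σ n ω) (by simp [hσ0])
    (hfin.subset fun n hn => (show σ n ω ≤ _ from hn).trans hkt)
  obtain ⟨j, hj : υ j ω = σ (n + 1) ω⟩ := hσυ ⟨n + 1, rfl⟩
  refine ⟨n, hn, hn1, ?_⟩
  rw [← hj] at hn1 ⊢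
  exact (le_stopMin_or_stopMin_succ_le hυ k j).resolve_left hn1.not_ge

lemma abs_sq_increment_sqVarGap_le (hσ : Monotone fun n => σ n ω) (hσ0 : σ 0 ω = 0)
    (hυ : Monotone fun n => υ n ω) (hσυ : range (fun n => σ n ω) ⊆ range (fun n => υ n ω))
    (hfin : {n | σ n ω ≤ t}.Finite)
    (hosc : ∀ n, oscOn X (stopMin (σ n) t ω) (stopMin (σ (n + 1)) t ω) ω ≤ δ)
    (hX : ∀ j, ∃ r : ℝ, X (stopMin (υ j) t ω) ω = r) (k : ℕ) :
    ((stopVal (sqVarGap X σ υ) (υ (k + 1)) t ω - stopVal (sqVarGap X σ υ) (υ k) t ω) ^ 2).abs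
      ≤ ENNReal.ofReal (4 * δ ^ 2)
        * ((stopVal X (υ (k + 1)) t ω - stopVal X (υ k) t ω) ^ 2).abs := by
  set a : ℕ → ℝ≥0 := fun j => stopMin (υ j) t ω with ha
  have ha_le : ∀ j, (a j : ℝ≥0∞) ≤ υ j ω ∧ (a j : ℝ≥0∞) ≤ t := fun j => by
    rw [ha, coe_stopMin]; exact ⟨min_le_left _ _, min_le_right _ _⟩
  obtain ⟨n, hn, hn1, hk1⟩ := exists_bracket_stopMin hσ0 hυ hσυ hfin k
  set c := stopMin (σ n) t ω with hc
  have hσX : ∀ i, ∃ r : ℝ, X (stopMin (σ i) t ω) ω = r := fun i => by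
    obtain ⟨j, hj⟩ := hσυ ⟨i, rfl⟩
    rw [stopMin_congr hj.symm]; exact hX j
  have hS : ∀ w, σ n ω ≤ υ w ω → (a w : ℝ≥0∞) ≤ σ (n + 1) ω →
      sqVarAlong X σ (a w) ω = sqVarAlong X σ c ω + ((X (a w) ω - X c ω) ^ 2).abs := by
    intro w h₁ h₂
    have hcw : stopMin (σ n) (a w) ω = c := stopMin_stopMin_of_le h₁
    rw [sqVarAlong_eq_add_sq hσ h₂ (hX w) (hcw ▸ hσX n), hcw]
  have hV : sqVarAlong X υ (a (k + 1)) ω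
      = sqVarAlong X υ (a k) ω + ((X (a (k + 1)) ω - X (a k) ω) ^ 2).abs := by
    have hk : stopMin (υ k) (a (k + 1)) ω = a k := stopMin_stopMin_of_le (hυ k.le_succ)
    rw [sqVarAlong_eq_add_sq hυ (ha_le (k + 1)).1 (hX (k + 1)) (hk ▸ hX k), hk]
  have hck : c ≤ a k := by
    rw [← ENNReal.coe_le_coe, hc, coe_stopMin, min_eq_left (hn.trans (ha_le k).2)]; exact hn
  have hkc' : a k ≤ stopMin (σ (n + 1)) t ω := by
    rw [← ENNReal.coe_le_coe, coe_stopMin (σ (n + 1))]; exact le_min hn1.le (ha_le k).2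
  obtain ⟨x, hx⟩ := hX k
  obtain ⟨y, hy⟩ := hX (k + 1)
  obtain ⟨z, hz⟩ := hσX n
  have hxz : |x - z| ≤ δ :=
    abs_sub_le_of_oscOn_le ⟨hck, hkc'⟩ ⟨le_rfl, hck.trans hkc'⟩ hx hz (hosc n)
  change ((((sqVarAlong X σ (a (k + 1)) ω : EReal) - sqVarAlong X υ (a (k + 1)) ω)
      - ((sqVarAlong X σ (a k) ω : EReal) - sqVarAlong X υ (a k) ω)) ^ 2).abs
    ≤ ENNReal.ofReal (4 * δ ^ 2) * ((X (a (k + 1)) ω - X (a k) ω) ^ 2).abs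
  rw [hS (k + 1) ((hn.trans (ha_le k).1).trans (hυ k.le_succ)) hk1,
    hS k (hn.trans (ha_le k).1) hn1.le, hV, hx, hy, hz, EReal.abs_coe_sub_coe_sq,
    EReal.abs_coe_sub_coe_sq, EReal.abs_coe_sub_coe_sq]
  exact abs_sq_increment_le (sqVarAlong_stopMin_ne_top hσ n fun i _ => hσX i)
    (sqVarAlong_stopMin_ne_top hυ k fun i _ => hX i) hxz

theorem sqVarAlong_sqVarGap_le (hδ : 0 < δ) (hσ : Monotone fun n => σ n ω) (hσ0 : σ 0 ω = 0)
    (hυ : Monotone fun n => υ n ω) (hσυ : range (fun n => σ n ω) ⊆ range (fun n => υ n ω))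
    (hfin : {n | σ n ω ≤ t}.Finite)
    (hosc : ∀ n, oscOn X (stopMin (σ n) t ω) (stopMin (σ (n + 1)) t ω) ω ≤ δ) :
    sqVarAlong (sqVarGap X σ υ) υ t ω ≤ ENNReal.ofReal (4 * δ ^ 2) * sqVarAlong X υ t ω := by
  by_cases hV : sqVarAlong X υ t ω = ⊤
  · rw [hV, ENNReal.mul_top (ENNReal.ofReal_pos.mpr (by positivity)).ne']
    exact le_top
  have hX : ∀ j, ∃ r : ℝ, X (stopMin (υ j) t ω) ω = r := fun j =>
    EReal.exists_coe_of_abs_sub_sq_ne_top (ne_top_of_le_ne_top hV (ENNReal.le_tsum j))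
  rw [sqVarAlong, sqVarAlong, ← ENNReal.tsum_mul_left]
  exact ENNReal.tsum_le_tsum (abs_sq_increment_sqVarGap_le hσ hσ0 hυ hσυ hfin hosc hX)

end Refinement

theorem fineCover_sqVar_estimate_general (M : MartingaleSpace Ω)
    (X : ℝ≥0 → Ω → EReal) (δ : ℝ) (hδ : 0 < δ)
    (E : Set (ℝ≥0 × Ω)) (σ τ υ : ℕ → Ω → ℝ≥0∞)
    (hσ : FinelyCoversOn M σ X δ E)
    (hυmono : ∀ ω, Monotone fun n => υ n ω)
    (hυrange : ∀ ω,
      range (fun n => υ n ω) = range (fun n => σ n ω) ∪ range (fun n => τ n ω)) :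
    ∀ p ∈ E,
      sqVarAlong (fun t ω =>
          ((sqVarAlong X σ t ω : ℝ≥0∞) : EReal) - ((sqVarAlong X υ t ω : ℝ≥0∞) : EReal))
        υ p.1 p.2 ≤ ENNReal.ofReal (4 * δ ^ 2) * sqVarAlong X υ p.1 p.2 := by
  rintro ⟨t, ω⟩ hp
  obtain ⟨-, hσmono, hσ0, hσE⟩ := hσ
  obtain ⟨hfin, hosc⟩ := hσE hp
  exact sqVarAlong_sqVarGap_le hδ (hσmono ω) (hσ0 ω) (hυmono ω)
    (hυrange ω ▸ subset_union_left) hfin hosc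

/-- if `σ` finely covers the martingale `X` with accuracy `δ` on `E`, `τ` is a
sequence of stopping times with only finitely many `τ_n(ω) ≤ t` on `E`, and `υ` is the
nondecreasing rearrangement of `σ` and `τ`, then
`[[X]^σ − [X]^υ]^υ_t ≤ 4δ²[X]^υ_t` on `E`. -/
theorem fineCover_sqVar_estimate (M : MartingaleSpace Ω)
    (X : ℝ≥0 → Ω → EReal) (hX : IsMartingale M X) (δ : ℝ) (hδ : 0 < δ)
    (E : Set (ℝ≥0 × Ω)) (σ τ υ : ℕ → Ω → ℝ≥0∞)
    (hσ : FinelyCoversOn M σ X δ E)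
    (hτ : ∀ n, M.IsStoppingTime (τ n))
    (hτfin : ∀ p ∈ E, {n : ℕ | τ n p.2 ≤ (p.1 : ℝ≥0∞)}.Finite)
    (hυ : ∀ n, M.IsStoppingTime (υ n))
    (hυmono : ∀ ω, Monotone fun n => υ n ω)
    (hυrange : ∀ ω,
      range (fun n => υ n ω) = range (fun n => σ n ω) ∪ range (fun n => τ n ω)) :
    ∀ p ∈ E,
      sqVarAlong (fun t ω =>
          ((sqVarAlong X σ t ω : ℝ≥0∞) : EReal) - ((sqVarAlong X υ t ω : ℝ≥0∞) : EReal))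
        υ p.1 p.2 ≤ ENNReal.ofReal (4 * δ ^ 2) * sqVarAlong X υ p.1 p.2 :=
  fineCover_sqVar_estimate_general M X δ hδ E σ τ υ hσ hυmono hυrange

end ModelFreeBDG
end
end
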